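/- arXiv:2307.11949 — 3 statements merged into one kernel-verified Lean document; each statement's English description precedes it below -/
import Mathlib

section
/- Under the same 1-D noisy-value model with g = s + T, T > 1, and subgoal step k with 1 \le k \le T, the probability that the high-level policy errs, P[\hat{V}(s+k, g) \le \hat{V}(s-k, g)], equals \Phi(-\sqrt{2}/(\sigma\sqrt{(T/k)^2+1})). -/
open MeasureTheory ProbabilityTheory

noncomputable def Phi (x : ℝ) : ℝ := ProbabilityTheory.cdf (ProbabilityTheory.gaussianReal 0 1) x

/-!
Both candidate values are negative multiples of `1 + σ z`, with weights `T - k` and `T + k`.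
The policy errs exactly when the centred Gaussian `(T - k) z₁ - (T + k) z₂`, of variance
`(T - k)² + (T + k)² = 2 (T² + k²)`, exceeds `2k / σ`; by the symmetry of the standard normal
this has probability `Φ(-(2k/σ) / √(2 (T² + k²)))`.
-/

open Set

namespace ProbabilityTheory

lemma gaussianReal_zero_one_Ici (c : ℝ) :
    gaussianReal 0 1 (Ici c) = ENNReal.ofReal (Phi (-c)) := by
  have hsymm : (gaussianReal 0 1).map (fun x ↦ -x) = gaussianReal 0 1 := by
    rw [gaussianReal_map_neg, neg_zero]
  rw [← hsymm, Measure.map_apply measurable_neg measurableSet_Ici, neg_preimage,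
    neg_Ici, Phi, ofReal_cdf]

lemma gaussianReal_Ici {μ : ℝ} {v : NNReal} (hv : v ≠ 0) (c : ℝ) :
    gaussianReal μ v (Ici c) = ENNReal.ofReal (Phi (-((c - μ) / Real.sqrt v))) := by
  have hsqrt : 0 < Real.sqrt v := Real.sqrt_pos.mpr (by positivity)
  have hscale : (gaussianReal 0 1).map (fun x ↦ μ + Real.sqrt v * x) = gaussianReal μ v := by
    change (gaussianReal 0 1).map ((μ + ·) ∘ (Real.sqrt v * ·)) = _
    rw [← Measure.map_map (by fun_prop) (by fun_prop), gaussianReal_map_const_mul,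
      gaussianReal_map_const_add, mul_zero, zero_add, mul_one]
    congr 1
    exact NNReal.eq (Real.sq_sqrt v.coe_nonneg)
  have hpre : (fun x ↦ μ + Real.sqrt v * x) ⁻¹' Ici c = Ici ((c - μ) / Real.sqrt v) := by
    ext x
    simp only [mem_preimage, mem_Ici, div_le_iff₀ hsqrt]
    constructor <;> intro h <;> linarith
  rw [← hscale, Measure.map_apply (by fun_prop) measurableSet_Ici, hpre,
    gaussianReal_zero_one_Ici]

lemma gaussianReal_linearCombination_of_indepFun {Ω : Type*} {mΩ : MeasurableSpace Ω}
    {P : Measure Ω} {X Y : Ω → ℝ} {m₁ m₂ : ℝ} {v₁ v₂ : NNReal} (hXY : IndepFun X Y P)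
    (hX : P.map X = gaussianReal m₁ v₁) (hY : P.map Y = gaussianReal m₂ v₂) (a b : ℝ) :
    P.map (fun ω ↦ a * X ω + b * Y ω) = gaussianReal (a * m₁ + b * m₂)
      (.mk (a ^ 2) (sq_nonneg a) * v₁ + .mk (b ^ 2) (sq_nonneg b) * v₂) := by
  have hX' : HasLaw X (gaussianReal m₁ v₁) P :=
    ⟨AEMeasurable.of_map_ne_zero (by simp [hX, NeZero.ne]), hX⟩
  have hY' : HasLaw Y (gaussianReal m₂ v₂) P :=
    ⟨AEMeasurable.of_map_ne_zero (by simp [hY, NeZero.ne]), hY⟩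
  exact gaussianReal_add_gaussianReal_of_indepFun
    (hXY.comp (measurable_const_mul a) (measurable_const_mul b))
    (gaussianReal_const_mul hX' a).map_eq (gaussianReal_const_mul hY' b).map_eq

end ProbabilityTheory

lemma two_mul_div_div_sqrt_two_mul_sq_add_sq {T k σ : ℝ} (hk : 0 < k) (hσ : 0 < σ) :
    2 * k / σ / Real.sqrt (2 * (T ^ 2 + k ^ 2))
      = Real.sqrt 2 / (σ * Real.sqrt ((T / k) ^ 2 + 1)) := by
  have hsum : 2 * (T ^ 2 + k ^ 2) = (Real.sqrt 2 * k) ^ 2 * ((T / k) ^ 2 + 1) := by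
    rw [mul_pow, Real.sq_sqrt zero_le_two]
    field_simp
  have hpos : 0 < Real.sqrt ((T / k) ^ 2 + 1) := Real.sqrt_pos.mpr (by positivity)
  have htwo : Real.sqrt 2 * Real.sqrt 2 = 2 := Real.mul_self_sqrt zero_le_two
  rw [hsum, Real.sqrt_mul (sq_nonneg _), Real.sqrt_sq (by positivity)]
  field_simp
  linear_combination -htwo

theorem high_level_policy_error_general {Ω : Type*} [MeasureSpace Ω]
    (s T k σ : ℝ) (hk₁ : 1 ≤ k) (hk₂ : k ≤ T) (hσ : 0 < σ)
    (z : ℝ → ℝ → Ω → ℝ) (Vhat : ℝ → ℝ → Ω → ℝ)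
    (hV : ∀ x g ω, Vhat x g ω = -|x - g| * (1 + σ * z x g ω))
    (hz₁ : Measure.map (z (s + k) (s + T)) ℙ = gaussianReal 0 1)
    (hz₂ : Measure.map (z (s - k) (s + T)) ℙ = gaussianReal 0 1)
    (hind : IndepFun (z (s + k) (s + T)) (z (s - k) (s + T)) ℙ) :
    ℙ {ω | Vhat (s + k) (s + T) ω ≤ Vhat (s - k) (s + T) ω} =
      ENNReal.ofReal (Phi (-(Real.sqrt 2) / (σ * Real.sqrt ((T / k) ^ 2 + 1)))) := by
  have hk : 0 < k := by linarith
  set z₁ := z (s + k) (s + T)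
  set z₂ := z (s - k) (s + T)
  set W : Ω → ℝ := fun ω ↦ (T - k) * z₁ ω + -(T + k) * z₂ ω
  have hevent :
      {ω | Vhat (s + k) (s + T) ω ≤ Vhat (s - k) (s + T) ω} = W ⁻¹' Ici (2 * k / σ) := by
    ext ω
    simp only [mem_ofPred_eq, mem_preimage, mem_Ici, hV, div_le_iff₀ hσ, W,
      abs_of_nonpos (by linarith : s + k - (s + T) ≤ 0),
      abs_of_nonpos (by linarith : s - k - (s + T) ≤ 0)]
    constructor <;> intro h <;> linarith
  let v : NNReal := ⟨2 * (T ^ 2 + k ^ 2), by positivity⟩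
  have hv : (v : ℝ) = 2 * (T ^ 2 + k ^ 2) := rfl
  have hv₀ : v ≠ 0 := by
    rw [← NNReal.coe_ne_zero, hv]
    positivity
  have hW : Measure.map W ℙ = gaussianReal 0 v := by
    rw [gaussianReal_linearCombination_of_indepFun hind hz₁ hz₂]
    congr 1
    · ring
    · ext
      simp only [hv, NNReal.coe_add, NNReal.coe_mul, NNReal.coe_one, NNReal.coe_mk]
      ring
  have hWm : AEMeasurable W ℙ :=
    .of_map_ne_zero (hW ▸ IsProbabilityMeasure.ne_zero (gaussianReal 0 v))
  rw [hevent, ← Measure.map_apply_of_aemeasurable hWm measurableSet_Ici, hW,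
    gaussianReal_Ici hv₀, sub_zero, hv, two_mul_div_div_sqrt_two_mul_sq_add_sq hk hσ, neg_div]

/-- **High-level policy error probability in the 1-D toy environment.**
With `V̂(x, g) = -|x - g| (1 + σ z_{x,g})`, goal `g = s + T`, `T > 1`, subgoal step `k`
with `1 ≤ k ≤ T`, and independent standard Gaussian noise at the two candidate subgoals,
the probability that the high-level policy errs, `P[V̂(s+k, g) ≤ V̂(s-k, g)]`, equals
`Φ(-√2 / (σ √((T/k)² + 1)))`. -/
theorem high_level_policy_error {Ω : Type*} [MeasureSpace Ω]
    [IsProbabilityMeasure (ℙ : Measure Ω)]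
    (s T k σ : ℝ) (hT : 1 < T) (hk₁ : 1 ≤ k) (hk₂ : k ≤ T) (hσ : 0 < σ)
    (z : ℝ → ℝ → Ω → ℝ) (Vhat : ℝ → ℝ → Ω → ℝ)
    (hV : ∀ x g ω, Vhat x g ω = -|x - g| * (1 + σ * z x g ω))
    (hz₁ : Measure.map (z (s + k) (s + T)) ℙ = gaussianReal 0 1)
    (hz₂ : Measure.map (z (s - k) (s + T)) ℙ = gaussianReal 0 1)
    (hind : IndepFun (z (s + k) (s + T)) (z (s - k) (s + T)) ℙ) :
    ℙ {ω | Vhat (s + k) (s + T) ω ≤ Vhat (s - k) (s + T) ω} =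
      ENNReal.ofReal (Phi (-(Real.sqrt 2) / (σ * Real.sqrt ((T / k) ^ 2 + 1)))) :=
  high_level_policy_error_general s T k σ hk₁ hk₂ hσ z Vhat hV hz₁ hz₂ hind
end

section
/- Under the same 1-D noisy-value model, the probability that the low-level policy errs when reaching a subgoal k steps away, P[\hat{V}(s+1, s+k) \le \hat{V}(s-1, s+k)], equals \Phi(-\sqrt{2}/(\sigma\sqrt{k^2+1})). -/
open MeasureTheory ProbabilityTheory

/-!
The policy errs exactly when `(k + 1) z₂ - (k - 1) z₁ ≤ -2 / σ`, where `z₁, z₂` are the noises at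
`s + 1` and `s - 1`. Being a linear combination of independent standard Gaussians, the left side is
centred Gaussian with variance `(k - 1)² + (k + 1)² = 2 (k² + 1)`, so the error probability is
`Φ((-2 / σ) / √(2 (k² + 1)))`.
-/

open Set NNReal

namespace ProbabilityTheory

lemma cdf_gaussianReal {μ : ℝ} {v : ℝ≥0} (hv : v ≠ 0) (x : ℝ) :
    cdf (gaussianReal μ v) x = Phi ((x - μ) / √v) := by
  have hsqrt : 0 < √(v : ℝ) := Real.sqrt_pos.mpr (by positivity)
  have hstd : gaussianReal μ v = (gaussianReal 0 1).map (fun y ↦ μ + √(v : ℝ) * y) := by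
    rw [show (fun y ↦ μ + √(v : ℝ) * y) = (μ + ·) ∘ (√(v : ℝ) * ·) from rfl,
      ← Measure.map_map (by fun_prop) (by fun_prop), gaussianReal_map_const_mul,
      gaussianReal_map_const_add]
    congr 1
    · ring
    · ext; simp [Real.sq_sqrt v.coe_nonneg]
  have hpre : (fun y ↦ μ + √(v : ℝ) * y) ⁻¹' Iic x = Iic ((x - μ) / √v) := by
    ext y
    simp only [mem_preimage, mem_Iic, le_div_iff₀ hsqrt]
    constructor <;> intro h <;> linarith
  rw [Phi, ← ENNReal.ofReal_eq_ofReal_iff (cdf_nonneg _ _) (cdf_nonneg _ _), ofReal_cdf,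
    ofReal_cdf, hstd, Measure.map_apply (by fun_prop) measurableSet_Iic, hpre]

variable {Ω : Type*} {mΩ : MeasurableSpace Ω} {P : Measure Ω} {X Y : Ω → ℝ}

lemma map_const_mul_add_const_mul_of_indepFun {m₁ m₂ : ℝ} {v₁ v₂ : ℝ≥0}
    (hXY : IndepFun X Y P) (hX : P.map X = gaussianReal m₁ v₁)
    (hY : P.map Y = gaussianReal m₂ v₂) (a b : ℝ) :
    P.map (fun ω ↦ a * X ω + b * Y ω) =
      gaussianReal (a * m₁ + b * m₂)
        (NNReal.mk (a ^ 2) (sq_nonneg a) * v₁ + NNReal.mk (b ^ 2) (sq_nonneg b) * v₂) := by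
  have hXm : AEMeasurable X P := AEMeasurable.of_map_ne_zero (by simp [NeZero.ne, hX])
  have hYm : AEMeasurable Y P := AEMeasurable.of_map_ne_zero (by simp [NeZero.ne, hY])
  have haX :
      P.map ((a * ·) ∘ X) = gaussianReal (a * m₁) (NNReal.mk (a ^ 2) (sq_nonneg a) * v₁) := by
    rw [← AEMeasurable.map_map_of_aemeasurable (by fun_prop) hXm, hX, gaussianReal_map_const_mul]
  have hbY :
      P.map ((b * ·) ∘ Y) = gaussianReal (b * m₂) (NNReal.mk (b ^ 2) (sq_nonneg b) * v₂) := by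
    rw [← AEMeasurable.map_map_of_aemeasurable (by fun_prop) hYm, hY, gaussianReal_map_const_mul]
  exact gaussianReal_add_gaussianReal_of_indepFun
    (hXY.comp (measurable_const_mul a) (measurable_const_mul b)) haX hbY

lemma measure_le_eq_ofReal_cdf {W : Ω → ℝ} {μ : Measure ℝ} [IsProbabilityMeasure μ]
    (hW : P.map W = μ) (t : ℝ) :
    P {ω | W ω ≤ t} = ENNReal.ofReal (cdf μ t) := by
  have hWm : AEMeasurable W P := AEMeasurable.of_map_ne_zero (by simp [NeZero.ne, hW])
  rw [ofReal_cdf, ← hW, Measure.map_apply_of_aemeasurable hWm measurableSet_Iic]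
  rfl

end ProbabilityTheory

theorem low_level_policy_error_general {Ω : Type*} [MeasureSpace Ω]
    (s k σ : ℝ) (hk : 1 < k) (hσ : 0 < σ)
    (z : ℝ → ℝ → Ω → ℝ) (Vhat : ℝ → ℝ → Ω → ℝ)
    (hV : ∀ x g ω, Vhat x g ω = -|x - g| * (1 + σ * z x g ω))
    (hz₁ : Measure.map (z (s + 1) (s + k)) ℙ = gaussianReal 0 1)
    (hz₂ : Measure.map (z (s - 1) (s + k)) ℙ = gaussianReal 0 1)
    (hind : IndepFun (z (s + 1) (s + k)) (z (s - 1) (s + k)) ℙ) :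
    ℙ {ω | Vhat (s + 1) (s + k) ω ≤ Vhat (s - 1) (s + k) ω} =
      ENNReal.ofReal (Phi (-(Real.sqrt 2) / (σ * Real.sqrt (k ^ 2 + 1)))) := by
  have hdist₁ : |s + 1 - (s + k)| = k - 1 := by rw [abs_of_nonpos (by linarith)]; ring
  have hdist₂ : |s - 1 - (s + k)| = k + 1 := by rw [abs_of_nonpos (by linarith)]; ring
  have herr : {ω | Vhat (s + 1) (s + k) ω ≤ Vhat (s - 1) (s + k) ω} =
      {ω | -(k - 1) * z (s + 1) (s + k) ω + (k + 1) * z (s - 1) (s + k) ω ≤ -2 / σ} := by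
    ext ω
    simp only [mem_ofPred_eq, hV, hdist₁, hdist₂, le_div_iff₀ hσ]
    constructor <;> intro h <;> linarith
  have hvar :
      NNReal.mk ((-(k - 1)) ^ 2) (sq_nonneg _) * 1 + NNReal.mk ((k + 1) ^ 2) (sq_nonneg _) * 1 ≠ 0 := by
    rw [← NNReal.coe_ne_zero]; push_cast; nlinarith
  rw [herr, measure_le_eq_ofReal_cdf (map_const_mul_add_const_mul_of_indepFun hind hz₁ hz₂ _ _),
    cdf_gaussianReal hvar]
  congr 2
  push_cast
  rw [show (-(k - 1)) ^ 2 * 1 + (k + 1) ^ 2 * 1 = 2 * (k ^ 2 + 1) by ring,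
    Real.sqrt_mul zero_le_two]
  have hsqrt2 : √2 * √2 = (2 : ℝ) := Real.mul_self_sqrt zero_le_two
  field_simp
  linear_combination hsqrt2

/-- **Low-level policy error probability in the 1-D toy environment.**
With `V̂(x, g) = -|x - g| (1 + σ z_{x,g})`, subgoal `s + k` with `k > 1`, and independent
standard Gaussian noise at the two queried states, the probability that the low-level
policy errs, `P[V̂(s+1, s+k) ≤ V̂(s-1, s+k)]`, equals `Φ(-√2 / (σ √(k² + 1)))`. -/
theorem low_level_policy_error {Ω : Type*} [MeasureSpace Ω]
    [IsProbabilityMeasure (ℙ : Measure Ω)]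
    (s k σ : ℝ) (hk : 1 < k) (hσ : 0 < σ)
    (z : ℝ → ℝ → Ω → ℝ) (Vhat : ℝ → ℝ → Ω → ℝ)
    (hV : ∀ x g ω, Vhat x g ω = -|x - g| * (1 + σ * z x g ω))
    (hz₁ : Measure.map (z (s + 1) (s + k)) ℙ = gaussianReal 0 1)
    (hz₂ : Measure.map (z (s - 1) (s + k)) ℙ = gaussianReal 0 1)
    (hind : IndepFun (z (s + 1) (s + k)) (z (s - 1) (s + k)) ℙ) :
    ℙ {ω | Vhat (s + 1) (s + k) ω ≤ Vhat (s - 1) (s + k) ω} =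
      ENNReal.ofReal (Phi (-(Real.sqrt 2) / (σ * Real.sqrt (k ^ 2 + 1)))) :=
  low_level_policy_error_general s k σ hk hσ z Vhat hV hz₁ hz₂ hind
end

section
/- In the 1-D noisy-value environment with goal distance T > 1 and subgoal step k (1 \le k \le T, T/k an integer), the probability that the hierarchical policy \pi^\ell \circ \pi^h selects an incorrect action is at most \Phi(-\sqrt{2}/(\sigma\sqrt{(T/k)^2+1})) + \Phi(-\sqrt{2}/(\sigma\sqrt{k^2+1})), where \Phi is the standard normal CDF. -/
open MeasureTheory ProbabilityTheory

/-!
A level of the policy picks the wrong neighbour when it compares the noisy values of two points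
at distances `D - d` and `D + d` from its target (`D = T`, `d = k` at the high level, `D = k`,
`d = 1` at the low level). Unfolding `V̂`, this happens iff `2d ≤ σ(D - d)X - σ(D + d)Y` for
independent standard normals `X, Y`; the right-hand side is centred Gaussian with variance
`2σ²(D² + d²)`, so the probability is exactly `Φ(-√2 / (σ√((D/d)² + 1)))`. A union bound over
the two levels finishes the proof.
-/

open Real NNReal

namespace ProbabilityTheory

variable {Ω : Type*} {mΩ : MeasurableSpace Ω} {P : Measure Ω} {X Y W : Ω → ℝ}

lemma map_mul_sub_mul_eq_gaussianReal_of_indepFun (hXY : IndepFun X Y P)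
    (hX : P.map X = gaussianReal 0 1) (hY : P.map Y = gaussianReal 0 1) (a b : ℝ) :
    P.map (fun ω ↦ a * X ω - b * Y ω) = gaussianReal 0 ⟨a ^ 2 + b ^ 2, by positivity⟩ := by
  have hXm : AEMeasurable X P := .of_map_ne_zero (hX ▸ IsProbabilityMeasure.ne_zero _)
  have hYm : AEMeasurable Y P := .of_map_ne_zero (hY ▸ IsProbabilityMeasure.ne_zero _)
  have hind : IndepFun (fun ω ↦ a * X ω) (fun ω ↦ -b * Y ω) P :=
    hXY.comp (measurable_const_mul a) (measurable_const_mul (-b))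
  have hsum := gaussianReal_add_gaussianReal_of_indepFun hind
    (gaussianReal_const_mul ⟨hXm, hX⟩ a).map_eq (gaussianReal_const_mul ⟨hYm, hY⟩ (-b)).map_eq
  simp only [mul_zero, add_zero, mul_one, neg_sq] at hsum
  convert hsum using 2
  · ext ω; simp only [Pi.add_apply]; ring
  · rfl

lemma measure_le_eq_ofReal_Phi {v : ℝ≥0} (hv : v ≠ 0) (hW : P.map W = gaussianReal 0 v)
    (c : ℝ) : P {ω | c ≤ W ω} = ENNReal.ofReal (Phi (-c / √v)) := by
  have hWm : AEMeasurable W P := .of_map_ne_zero (hW ▸ IsProbabilityMeasure.ne_zero _)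
  have hsv : 0 < √(v : ℝ) := by positivity
  have hstd : P.map (fun ω ↦ -W ω / √v) = gaussianReal 0 1 := by
    convert (gaussianReal_div_const (gaussianReal_neg ⟨hWm, hW⟩) (√v)).map_eq using 2
    · simp
    · simp
    · apply NNReal.eq; simp [hv]
  have hset : {ω | c ≤ W ω} = (fun ω ↦ -W ω / √v) ⁻¹' Set.Iic (-c / √v) := by
    ext ω; simp [div_le_div_iff_of_pos_right hsv]
  rw [hset, ← Measure.map_apply_of_aemeasurable (by fun_prop) measurableSet_Iic, hstd, Phi,
    ofReal_cdf]

lemma measure_noisyComparison_eq_ofReal_Phi {d D σ : ℝ} (hd : 0 < d) (hσ : 0 < σ)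
    (hXY : IndepFun X Y P) (hX : P.map X = gaussianReal 0 1) (hY : P.map Y = gaussianReal 0 1) :
    P {ω | -(D - d) * (1 + σ * X ω) ≤ -(D + d) * (1 + σ * Y ω)}
      = ENNReal.ofReal (Phi (-√2 / (σ * √((D / d) ^ 2 + 1)))) := by
  have hset : {ω | -(D - d) * (1 + σ * X ω) ≤ -(D + d) * (1 + σ * Y ω)}
      = {ω | 2 * d ≤ σ * (D - d) * X ω - σ * (D + d) * Y ω} := by
    ext ω
    simp only [Set.mem_ofPred_eq]
    constructor <;> intro h <;> linarith
  set v : ℝ≥0 := ⟨(σ * (D - d)) ^ 2 + (σ * (D + d)) ^ 2, by positivity⟩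
  have hv_eq : (v : ℝ) = (√2 * d * σ) ^ 2 * ((D / d) ^ 2 + 1) := by
    change (σ * (D - d)) ^ 2 + (σ * (D + d)) ^ 2 = _
    rw [mul_pow (√2 * d), mul_pow √2, sq_sqrt zero_le_two]
    field_simp
    ring
  have hv : v ≠ 0 := by
    rw [ne_eq, ← NNReal.coe_eq_zero, hv_eq]
    positivity
  have hlaw := map_mul_sub_mul_eq_gaussianReal_of_indepFun hXY hX hY (σ * (D - d)) (σ * (D + d))
  rw [hset, measure_le_eq_ofReal_Phi hv hlaw, hv_eq, sqrt_mul (sq_nonneg _),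
    sqrt_sq (by positivity)]
  have hsqrt_two : (2 : ℝ) = √2 * √2 := (mul_self_sqrt zero_le_two).symm
  congr 2
  rw [div_eq_div_iff (by positivity) (by positivity)]
  linear_combination (-(d * σ * √((D / d) ^ 2 + 1))) * hsqrt_two

end ProbabilityTheory

lemma measure_valueMisorder_eq_ofReal_Phi {Ω : Type*} {mΩ : MeasurableSpace Ω} {P : Measure Ω}
    {s d D σ : ℝ} (hd : 0 < d) (hdD : d ≤ D) (hσ : 0 < σ) {z Vhat : ℝ → ℝ → Ω → ℝ}
    (hV : ∀ x g ω, Vhat x g ω = -|x - g| * (1 + σ * z x g ω))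
    (hX : P.map (z (s + d) (s + D)) = gaussianReal 0 1)
    (hY : P.map (z (s - d) (s + D)) = gaussianReal 0 1)
    (hXY : IndepFun (z (s + d) (s + D)) (z (s - d) (s + D)) P) :
    P {ω | Vhat (s + d) (s + D) ω ≤ Vhat (s - d) (s + D) ω}
      = ENNReal.ofReal (Phi (-√2 / (σ * √((D / d) ^ 2 + 1)))) := by
  have hnear : |s + d - (s + D)| = D - d := by
    rw [abs_sub_comm, add_sub_add_left_eq_sub, abs_of_nonneg (sub_nonneg.mpr hdD)]
  have hfar : |s - d - (s + D)| = D + d := by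
    rw [abs_sub_comm, show s + D - (s - d) = D + d by ring, abs_of_nonneg (by linarith)]
  simp only [hV, hnear, hfar]
  exact measure_noisyComparison_eq_ofReal_Phi hd hσ hXY hX hY

theorem hierarchical_policy_error_bound_general {Ω : Type*} [MeasureSpace Ω]
    (s T k σ : ℝ) (hk₁ : 1 ≤ k) (hk₂ : k ≤ T) (hσ : 0 < σ)
    (z : ℝ → ℝ → Ω → ℝ) (Vhat : ℝ → ℝ → Ω → ℝ)
    (hV : ∀ x g ω, Vhat x g ω = -|x - g| * (1 + σ * z x g ω))
    (hz : ∀ x g, Measure.map (z x g) ℙ = gaussianReal 0 1)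
    (hind_h : IndepFun (z (s + k) (s + T)) (z (s - k) (s + T)) ℙ)
    (hind_l : IndepFun (z (s + 1) (s + k)) (z (s - 1) (s + k)) ℙ)
    (E : Set Ω)
    (hE : E ⊆ {ω | Vhat (s + k) (s + T) ω ≤ Vhat (s - k) (s + T) ω} ∪
            {ω | Vhat (s + 1) (s + k) ω ≤ Vhat (s - 1) (s + k) ω}) :
    ℙ E ≤ ENNReal.ofReal (Phi (-(Real.sqrt 2) / (σ * Real.sqrt ((T / k) ^ 2 + 1)))) +
          ENNReal.ofReal (Phi (-(Real.sqrt 2) / (σ * Real.sqrt (k ^ 2 + 1)))) := by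
  have hhigh := measure_valueMisorder_eq_ofReal_Phi (zero_lt_one.trans_le hk₁) hk₂ hσ hV
    (hz _ _) (hz _ _) hind_h
  have hlow := measure_valueMisorder_eq_ofReal_Phi zero_lt_one hk₁ hσ hV (hz _ _) (hz _ _) hind_l
  rw [div_one] at hlow
  calc ℙ E ≤ ℙ ({ω | Vhat (s + k) (s + T) ω ≤ Vhat (s - k) (s + T) ω} ∪
          {ω | Vhat (s + 1) (s + k) ω ≤ Vhat (s - 1) (s + k) ω}) := measure_mono hE
    _ ≤ _ := measure_union_le _ _
    _ = _ := by rw [hhigh, hlow]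

/-- **Hierarchical policy error bound (Proposition 1 of HIQL).**
In the 1-D noisy-value environment with `V̂(x, g) = -|x - g| (1 + σ z_{x,g})`,
goal distance `T > 1` and subgoal step `k` with `1 ≤ k ≤ T` and `T/k` an integer,
if the hierarchical policy `π^ℓ ∘ π^h` errs only when the high-level policy errs
(`V̂(s+k, s+T) ≤ V̂(s-k, s+T)`) or the low-level policy errs
(`V̂(s+1, s+k) ≤ V̂(s-1, s+k)`), then its error probability is at most
`Φ(-√2/(σ√((T/k)² + 1))) + Φ(-√2/(σ√(k² + 1)))`. -/
theorem hierarchical_policy_error_bound {Ω : Type*} [MeasureSpace Ω]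
    [IsProbabilityMeasure (ℙ : Measure Ω)]
    (s T k σ : ℝ) (hT : 1 < T) (hk₁ : 1 ≤ k) (hk₂ : k ≤ T) (hσ : 0 < σ)
    (hdiv : ∃ n : ℕ, T / k = n)
    (z : ℝ → ℝ → Ω → ℝ) (Vhat : ℝ → ℝ → Ω → ℝ)
    (hV : ∀ x g ω, Vhat x g ω = -|x - g| * (1 + σ * z x g ω))
    (hz : ∀ x g, Measure.map (z x g) ℙ = gaussianReal 0 1)
    (hind_h : IndepFun (z (s + k) (s + T)) (z (s - k) (s + T)) ℙ)
    (hind_l : IndepFun (z (s + 1) (s + k)) (z (s - 1) (s + k)) ℙ)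
    (E : Set Ω)
    (hE : E ⊆ {ω | Vhat (s + k) (s + T) ω ≤ Vhat (s - k) (s + T) ω} ∪
            {ω | Vhat (s + 1) (s + k) ω ≤ Vhat (s - 1) (s + k) ω}) :
    ℙ E ≤ ENNReal.ofReal (Phi (-(Real.sqrt 2) / (σ * Real.sqrt ((T / k) ^ 2 + 1)))) +
          ENNReal.ofReal (Phi (-(Real.sqrt 2) / (σ * Real.sqrt (k ^ 2 + 1)))) :=
  hierarchical_policy_error_bound_general s T k σ hk₁ hk₂ hσ z Vhat hV hz hind_h hind_l E hE
end
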